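/- arXiv:1309.7569 — 3 statements merged into one kernel-verified Lean document; each statement's English description precedes it below -/
import Mathlib

section
/- For 0 < q < 1, n ∈ ℕ, and nonzero complex c, d, x, the terminating series satisfies the c↔d symmetry: ₂φ₀(q^(-n), cx; —; q, d q^n / c) = (d/c)^n · ₂φ₀(q^(-n), dx; —; q, c q^n / d). -/
open scoped BigOperators

/-- q-Pochhammer infinite product `(a;q)_∞`. -/
noncomputable def qp (q a : ℂ) : ℂ := ∏' n : ℕ, (1 - a * q ^ n)

/-- q-Pochhammer `(a;q)_k`. -/
noncomputable def qpn (q a : ℂ) (k : ℕ) : ℂ := ∏ j ∈ Finset.range k, (1 - a * q ^ j)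

/-- theta function `θ(x;q) = (x;q)_∞ (q/x;q)_∞`. -/
noncomputable def theta (q x : ℂ) : ℂ := qp q x * qp q (q / x)

/-- the `₁φ₁(a;b;q,z)` series. -/
noncomputable def phi11 (q a b z : ℂ) : ℂ :=
  ∑' n : ℕ, qpn q a n / (qpn q q n * qpn q b n) * (-1) ^ n * q ^ (n * (n - 1) / 2) * z ^ n

/-- the terminating `₂φ₀(q^(-n),B;—;q,z)` series (Gasper–Rahman convention). -/
noncomputable def phi20 (q : ℂ) (n : ℕ) (B z : ℂ) : ℂ :=
  ∑ k ∈ Finset.range (n + 1),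
    qpn q ((q ^ n)⁻¹) k * qpn q B k / qpn q q k * (-1) ^ k * (q ^ (k * (k - 1) / 2))⁻¹ * z ^ k

/-!
Writing `[n, k]` for the Gaussian binomial coefficient, `(q^(-n);q)_k / (q;q)_k` equals
`[n, k] (-1)^k q^(k(k-1)/2) q^(-nk)`, so
`₂φ₀(q^(-n), B; —; q, z) = ∑ [n, k] (B;q)_k (z/q^n)^k`.
With `a = cx` and `t = d/c` the claim becomes
`∑ [n, k] (a;q)_k t^k = t^n ∑ [n, k] (ta;q)_k t^(-k)`. After the reflection `k ↦ n - k` on the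
right, both sides expand by the finite q-binomial theorem
`(a;q)_m = ∑ [m, j] (-a)^j q^(j(j-1)/2)` into the same double sum
`∑ [n, j] [n - j, m] (-a)^j q^(j(j-1)/2) t^(j+m)`, using `[n, j+m] [j+m, j] = [n, j] [n-j, m]`.
-/

open Finset

noncomputable def qBinom (q : ℂ) : ℕ → ℕ → ℂ
  | _, 0 => 1
  | 0, _ + 1 => 0
  | m + 1, j + 1 => qBinom q m (j + 1) + q ^ (m - j) * qBinom q m j

@[simp]
lemma qBinom_zero_right (q : ℂ) (m : ℕ) : qBinom q m 0 = 1 := by cases m <;> rfl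

lemma qBinom_succ_succ (q : ℂ) (m j : ℕ) :
    qBinom q (m + 1) (j + 1) = qBinom q m (j + 1) + q ^ (m - j) * qBinom q m j := rfl

lemma qBinom_eq_zero_of_lt (q : ℂ) {m j : ℕ} (h : m < j) : qBinom q m j = 0 := by
  induction m generalizing j with
  | zero => obtain ⟨j, rfl⟩ := Nat.exists_eq_succ_of_ne_zero h.ne'; rfl
  | succ m ih =>
    obtain ⟨j, rfl⟩ := Nat.exists_eq_succ_of_ne_zero (Nat.zero_lt_of_lt h).ne'
    rw [qBinom_succ_succ, ih (by omega), ih (by omega), mul_zero, add_zero]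

@[simp]
lemma qpn_zero (q a : ℂ) : qpn q a 0 = 1 := rfl

lemma qpn_succ (q a : ℂ) (k : ℕ) : qpn q a (k + 1) = qpn q a k * (1 - a * q ^ k) :=
  prod_range_succ _ _

lemma succ_mul_pred_div_two (j : ℕ) : (j + 1) * (j + 1 - 1) / 2 = j * (j - 1) / 2 + j := by
  rw [← Nat.choose_two_right, ← Nat.choose_two_right, Nat.choose_succ_succ',
    Nat.choose_one_right, add_comm]

lemma qBinom_mul_qpn_mul_qpn (q : ℂ) {n k : ℕ} (hk : k ≤ n) :
    qBinom q n k * qpn q q k * qpn q q (n - k) = qpn q q n := by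
  induction n generalizing k with
  | zero => obtain rfl := Nat.le_zero.mp hk; simp
  | succ n ih =>
    obtain _ | j := k
    · simp
    have hjn : j ≤ n := by omega
    have first : qBinom q n (j + 1) * qpn q q (j + 1) * qpn q q (n - j)
        = qpn q q n * (1 - q ^ (n - j)) := by
      rcases hjn.lt_or_eq with hlt | rfl
      · have split : qpn q q (n - j) = qpn q q (n - (j + 1)) * (1 - q ^ (n - j)) := by
          rw [show n - j = n - (j + 1) + 1 by omega, qpn_succ, pow_succ']
        rw [split, ← ih hlt]
        ring
      · simp [qBinom_eq_zero_of_lt q (Nat.lt_succ_self j)]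
    have second : qBinom q n j * qpn q q (j + 1) * qpn q q (n - j)
        = qpn q q n * (1 - q * q ^ j) := by
      rw [← ih hjn, qpn_succ]; ring
    have hpow : q ^ (n - j) * (q * q ^ j) = q * q ^ n := by
      rw [mul_left_comm, ← pow_add, Nat.sub_add_cancel hjn]
    rw [qBinom_succ_succ, Nat.add_sub_add_right, qpn_succ q q n]
    linear_combination first + q ^ (n - j) * second - qpn q q n * hpow

lemma qpn_eq_sum_qBinom (q a : ℂ) (m : ℕ) :
    qpn q a m = ∑ j ∈ range (m + 1), qBinom q m j * (-a) ^ j * q ^ (j * (j - 1) / 2) := by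
  induction m with
  | zero => simp
  | succ m ih =>
    set X : ℕ → ℂ := fun j => (-a) ^ j * q ^ (j * (j - 1) / 2) with hX
    have ih' : qpn q a m = ∑ j ∈ range (m + 1), qBinom q m j * X j := by
      simp only [ih, hX, mul_assoc]
    suffices qpn q a (m + 1) = ∑ j ∈ range (m + 2), qBinom q (m + 1) j * X j by
      simpa only [hX, mul_assoc] using this
    have hXsucc (j : ℕ) : X (j + 1) = -a * q ^ j * X j := by
      simp only [hX, succ_mul_pred_div_two, pow_add, pow_succ]; ring
    have shifted : ∑ j ∈ range (m + 1), qBinom q m (j + 1) * X (j + 1)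
        = ∑ j ∈ range (m + 1), qBinom q m j * X j - 1 := by
      have := sum_range_succ' (fun j => qBinom q m j * X j) (m + 1)
      rw [sum_range_succ, qBinom_eq_zero_of_lt q (Nat.lt_succ_self m)] at this
      simp only [qBinom_zero_right, hX] at this ⊢
      linear_combination -this
    have lowered : ∑ j ∈ range (m + 1), q ^ (m - j) * qBinom q m j * X (j + 1)
        = -a * q ^ m * ∑ j ∈ range (m + 1), qBinom q m j * X j := by
      rw [mul_sum]
      refine sum_congr rfl fun j hj => ?_
      rw [hXsucc, ← pow_sub_mul_pow q (Nat.le_of_lt_succ (mem_range.mp hj))]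
      ring
    rw [sum_range_succ', qBinom_zero_right]
    simp only [qBinom_succ_succ, add_mul, sum_add_distrib]
    rw [shifted, lowered, qpn_succ, ih']
    simp only [hX]
    ring

lemma sum_range_succ_eq_of_eq_zero {M : Type*} [AddCommMonoid M] {f : ℕ → M} {m n : ℕ}
    (hmn : m ≤ n) (hf : ∀ j, m < j → f j = 0) :
    ∑ j ∈ range (m + 1), f j = ∑ j ∈ range (n + 1), f j :=
  sum_subset (range_subset_range.mpr (by omega)) fun j _ hj => hf j (by simp at hj; omega)

lemma sum_range_succ_eq_sum_shift {M : Type*} [AddCommMonoid M] {g : ℕ → M} {n j : ℕ}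
    (hlow : ∀ k < j, g k = 0) (hhigh : ∀ k, n < k → g k = 0) :
    ∑ k ∈ range (n + 1), g k = ∑ m ∈ range (n + 1), g (j + m) := by
  rw [sum_range_succ_eq_of_eq_zero (n := j + n) (by omega) hhigh, add_assoc, sum_range_add,
    sum_eq_zero fun k hk => hlow k (mem_range.mp hk), zero_add]

lemma qpn_eq_sum_range_qBinom (q a : ℂ) {m n : ℕ} (hmn : m ≤ n) :
    qpn q a m = ∑ j ∈ range (n + 1), qBinom q m j * (-a) ^ j * q ^ (j * (j - 1) / 2) := by
  rw [qpn_eq_sum_qBinom, sum_range_succ_eq_of_eq_zero hmn]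
  intro j hj
  rw [qBinom_eq_zero_of_lt q hj, zero_mul, zero_mul]

section

variable {q : ℂ}

lemma qBinom_symm (hqq : ∀ m, qpn q q m ≠ 0) {n k : ℕ} (hk : k ≤ n) :
    qBinom q n (n - k) = qBinom q n k := by
  have h₁ := qBinom_mul_qpn_mul_qpn q (Nat.sub_le n k)
  have h₂ := qBinom_mul_qpn_mul_qpn q hk
  rw [Nat.sub_sub_self hk] at h₁
  apply mul_right_cancel₀ (mul_ne_zero (hqq (n - k)) (hqq k))
  linear_combination h₁ - h₂

lemma qBinom_mul_qBinom_add (hqq : ∀ m, qpn q q m ≠ 0) (n j m : ℕ) :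
    qBinom q n (j + m) * qBinom q (j + m) j = qBinom q n j * qBinom q (n - j) m := by
  rcases le_or_gt (j + m) n with h | h
  swap
  · rcases le_or_gt j n with hj | hj
    · simp [qBinom_eq_zero_of_lt q h, qBinom_eq_zero_of_lt q (by omega : n - j < m)]
    · simp [qBinom_eq_zero_of_lt q h, qBinom_eq_zero_of_lt q hj]
  have h₁ := qBinom_mul_qpn_mul_qpn q (Nat.le_add_right j m)
  have h₂ := qBinom_mul_qpn_mul_qpn q h
  have h₃ := qBinom_mul_qpn_mul_qpn q (by omega : j ≤ n)
  have h₄ := qBinom_mul_qpn_mul_qpn q (by omega : m ≤ n - j)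
  rw [Nat.add_sub_cancel_left] at h₁
  rw [Nat.sub_add_eq] at h₂
  apply mul_right_cancel₀ (mul_ne_zero (mul_ne_zero (hqq j) (hqq m)) (hqq (n - j - m)))
  linear_combination (qBinom q n (j + m) * qpn q q (n - j - m)) * h₁ + h₂
    - (qBinom q n j * qpn q q j) * h₄ - h₃

lemma qBinom_mul_qBinom_sub_comm (hqq : ∀ m, qpn q q m ≠ 0) (n j k : ℕ) :
    qBinom q n k * qBinom q (n - k) j = qBinom q n j * qBinom q (n - j) k := by
  rw [← qBinom_mul_qBinom_add hqq, ← qBinom_mul_qBinom_add hqq, add_comm k j,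
    ← qBinom_symm hqq (Nat.le_add_right j k), Nat.add_sub_cancel_left]

lemma sum_qBinom_mul_qpn_mul_pow (hqq : ∀ m, qpn q q m ≠ 0) (n : ℕ) (a t : ℂ) :
    ∑ k ∈ range (n + 1), qBinom q n k * qpn q a k * t ^ k
      = ∑ k ∈ range (n + 1), qBinom q n k * qpn q (t * a) (n - k) * t ^ k := by
  set M := ∑ j ∈ range (n + 1), ∑ m ∈ range (n + 1),
    qBinom q n j * qBinom q (n - j) m * (-a) ^ j * q ^ (j * (j - 1) / 2) * t ^ (j + m)
  have lhs : ∑ k ∈ range (n + 1), qBinom q n k * qpn q a k * t ^ k = M := calc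
    _ = ∑ k ∈ range (n + 1), ∑ j ∈ range (n + 1),
          qBinom q n k * qBinom q k j * (-a) ^ j * q ^ (j * (j - 1) / 2) * t ^ k := by
        refine sum_congr rfl fun k hk => ?_
        rw [qpn_eq_sum_range_qBinom q a (mem_range_succ_iff.mp hk), mul_sum, sum_mul]
        exact sum_congr rfl fun j _ => by ring
    _ = ∑ j ∈ range (n + 1), ∑ k ∈ range (n + 1),
          qBinom q n k * qBinom q k j * (-a) ^ j * q ^ (j * (j - 1) / 2) * t ^ k := sum_comm
    _ = M := by
        refine sum_congr rfl fun j _ => ?_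
        rw [sum_range_succ_eq_sum_shift (j := j)]
        · exact sum_congr rfl fun m _ => by rw [qBinom_mul_qBinom_add hqq]
        all_goals intro k hk; simp [qBinom_eq_zero_of_lt q hk]
  have rhs : ∑ k ∈ range (n + 1), qBinom q n k * qpn q (t * a) (n - k) * t ^ k = M := calc
    _ = ∑ k ∈ range (n + 1), ∑ j ∈ range (n + 1),
          qBinom q n k * qBinom q (n - k) j * (-(t * a)) ^ j * q ^ (j * (j - 1) / 2) * t ^ k := by
        refine sum_congr rfl fun k _ => ?_
        rw [qpn_eq_sum_range_qBinom q (t * a) (Nat.sub_le n k), mul_sum, sum_mul]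
        exact sum_congr rfl fun j _ => by ring
    _ = ∑ j ∈ range (n + 1), ∑ k ∈ range (n + 1),
          qBinom q n k * qBinom q (n - k) j * (-(t * a)) ^ j * q ^ (j * (j - 1) / 2) * t ^ k :=
        sum_comm
    _ = M := by
        refine sum_congr rfl fun j _ => sum_congr rfl fun k _ => ?_
        rw [qBinom_mul_qBinom_sub_comm hqq, pow_add]
        ring
  rw [lhs, rhs]

lemma sum_qBinom_mul_qpn_mul_pow_symm (hqq : ∀ m, qpn q q m ≠ 0) (n : ℕ) (a : ℂ) {t : ℂ}
    (ht : t ≠ 0) :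
    ∑ k ∈ range (n + 1), qBinom q n k * qpn q a k * t ^ k
      = t ^ n * ∑ k ∈ range (n + 1), qBinom q n k * qpn q (t * a) k * t⁻¹ ^ k := by
  rw [sum_qBinom_mul_qpn_mul_pow hqq, mul_sum, ← sum_range_reflect]
  refine sum_congr rfl fun k hk => ?_
  have hkn : k ≤ n := mem_range_succ_iff.mp hk
  rw [Nat.add_sub_cancel, qBinom_symm hqq hkn, Nat.sub_sub_self hkn, inv_pow,
    ← pow_sub_mul_pow t hkn]
  field_simp

lemma qpn_inv_pow_mul_qpn_sub_mul_pow (hq : q ≠ 0) {n k : ℕ} (hk : k ≤ n) :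
    qpn q (q ^ n)⁻¹ k * qpn q q (n - k) * (q ^ n) ^ k
      = (-1) ^ k * q ^ (k * (k - 1) / 2) * qpn q q n := by
  induction k with
  | zero => simp
  | succ k ih =>
    have factor : (1 - (q ^ n)⁻¹ * q ^ k) * q ^ n = -q ^ k * (1 - q * q ^ (n - (k + 1))) := by
      rw [← pow_succ', show n - (k + 1) + 1 = n - k by omega]
      field_simp
      rw [mul_sub, mul_one, ← pow_add, Nat.add_sub_cancel' (by omega)]
      ring
    rw [show n - k = n - (k + 1) + 1 by omega, qpn_succ] at ih
    rw [qpn_succ, pow_succ, succ_mul_pred_div_two, pow_add]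
    linear_combination (qpn q (q ^ n)⁻¹ k * qpn q q (n - (k + 1)) * (q ^ n) ^ k) * factor
      - q ^ k * ih (by omega)

lemma phi20_eq_sum_qBinom (hq : q ≠ 0) (hqq : ∀ m, qpn q q m ≠ 0) (n : ℕ) (B z : ℂ) :
    phi20 q n B z = ∑ k ∈ range (n + 1), qBinom q n k * qpn q B k * (z / q ^ n) ^ k := by
  refine sum_congr rfl fun k hk => ?_
  have hkn : k ≤ n := mem_range_succ_iff.mp hk
  have hbinom : qBinom q n k = qpn q q n / (qpn q q k * qpn q q (n - k)) := by
    rw [← qBinom_mul_qpn_mul_qpn q hkn]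
    field_simp [hqq k, hqq (n - k)]
  have hpoch : qpn q (q ^ n)⁻¹ k
      = (-1) ^ k * q ^ (k * (k - 1) / 2) * qpn q q n / (qpn q q (n - k) * (q ^ n) ^ k) := by
    rw [← qpn_inv_pow_mul_qpn_sub_mul_pow hq hkn]
    field_simp [hqq (n - k)]
  rw [hbinom, hpoch, div_pow]
  field_simp [hqq k, hqq (n - k)]
  rw [← pow_mul, Even.neg_one_pow ⟨k, by ring⟩, one_mul]

end

lemma qpn_ofReal_self_ne_zero {q : ℝ} (hq0 : 0 < q) (hq1 : q < 1) (m : ℕ) :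
    qpn (q : ℂ) q m ≠ 0 := by
  refine prod_ne_zero_iff.mpr fun j _ => ?_
  rw [← pow_succ', sub_ne_zero, ne_comm]
  exact_mod_cast (pow_lt_one₀ hq0.le hq1 j.succ_ne_zero).ne

theorem phi20_cd_symm_general (q : ℝ) (hq0 : 0 < q) (hq1 : q < 1) (n : ℕ) (c d x : ℂ)
    (hc : c ≠ 0) (hd : d ≠ 0) :
    phi20 (q : ℂ) n (c * x) (d * (q : ℂ) ^ n / c) =
      (d / c) ^ n * phi20 (q : ℂ) n (d * x) (c * (q : ℂ) ^ n / d) := by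
  have hq : (q : ℂ) ≠ 0 := Complex.ofReal_ne_zero.mpr hq0.ne'
  have hqq := qpn_ofReal_self_ne_zero hq0 hq1
  have cancel (u v : ℂ) : u * (q : ℂ) ^ n / v / (q : ℂ) ^ n = u / v := by
    field_simp [pow_ne_zero n hq]
  rw [phi20_eq_sum_qBinom hq hqq, phi20_eq_sum_qBinom hq hqq, cancel, cancel,
    sum_qBinom_mul_qpn_mul_pow_symm hqq n (c * x) (div_ne_zero hd hc), inv_div,
    ← mul_assoc, div_mul_cancel₀ d hc]

/-- `₂φ₀(q^(-n),cx;—;q,dq^n/c) = (d/c)^n ₂φ₀(q^(-n),dx;—;q,cq^n/d)`. -/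
theorem phi20_cd_symm (q : ℝ) (hq0 : 0 < q) (hq1 : q < 1) (n : ℕ) (c d x : ℂ)
    (hc : c ≠ 0) (hd : d ≠ 0) (hx : x ≠ 0) :
    phi20 (q : ℂ) n (c * x) (d * (q : ℂ) ^ n / c) =
      (d / c) ^ n * phi20 (q : ℂ) n (d * x) (c * (q : ℂ) ^ n / d) :=
  phi20_cd_symm_general q hq0 hq1 n c d x hc hd
end

section
/- Let w(x;c,d;q) = 1/((cx;q)_∞ (dx;q)_∞). Then for fixed z ≠ 0 and k → −∞, w(z q^k) = ((c d z²)^k q^(k(k−1)) / (θ(cz;q) θ(dz;q))) (1 + O(q^(−k))); more precisely, θ(cz;q) θ(dz;q) w(z q^k) (cdz²)^(−k) q^(−k(k−1)) → 1 as k → −∞. -/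
open scoped BigOperators

/-!
The theta function is quasi-periodic, `θ(xq) = -x⁻¹ θ(x)`, hence
`θ(xq⁻ⁿ) q^(n(n+1)/2) = (-x)ⁿ θ(x)`. Since `θ(xq⁻ⁿ) = (xq⁻ⁿ;q)_∞ (qⁿ⁺¹/x;q)_∞`, at `k = -n` the
normalised weight collapses to `(qⁿ⁺¹/(cz);q)_∞ (qⁿ⁺¹/(dz);q)_∞`, a product of two tails of
convergent non-vanishing products, which tends to `1`.
-/

open Filter Topology

section

variable {Q : ℂ}

lemma summable_norm_mul_pow (hQ : ‖Q‖ < 1) (a : ℂ) : Summable fun n : ℕ => ‖a * Q ^ n‖ := by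
  simpa only [norm_mul, norm_pow] using
    (summable_geometric_of_lt_one (norm_nonneg Q) hQ).mul_left ‖a‖

lemma multipliable_qp (hQ : ‖Q‖ < 1) (a : ℂ) : Multipliable fun n : ℕ => 1 - a * Q ^ n := by
  simpa only [sub_eq_add_neg] using multipliable_one_add_of_summable (f := fun n => -(a * Q ^ n))
    (by simpa only [norm_neg] using summable_norm_mul_pow hQ a)

lemma qp_ne_zero (hQ : ‖Q‖ < 1) {a : ℂ} (ha : ∀ n : ℕ, a * Q ^ n ≠ 1) : qp Q a ≠ 0 := by
  simpa only [qp, sub_eq_add_neg] using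
    tprod_one_add_ne_zero_of_summable (fun n => by simpa only [← sub_eq_add_neg, sub_ne_zero]
      using (ha n).symm) (by simpa only [norm_neg] using summable_norm_mul_pow hQ a)

lemma qpn_mul_qp_mul_pow (hQ : ‖Q‖ < 1) (a : ℂ) (n : ℕ) :
    qpn Q a n * qp Q (a * Q ^ n) = qp Q a := by
  have hshift : ∀ m : ℕ, 1 - a * Q ^ n * Q ^ m = 1 - a * Q ^ (m + n) := fun m => by ring
  rw [qp, qp, qpn, tprod_congr hshift]
  exact Multipliable.prod_mul_tprod_nat_mul'
    ((multipliable_qp hQ (a * Q ^ n)).congr hshift)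

lemma tendsto_qp_mul_pow (hQ : ‖Q‖ < 1) {a : ℂ} (ha : qp Q a ≠ 0) :
    Tendsto (fun n : ℕ => qp Q (a * Q ^ n)) atTop (𝓝 1) := by
  have hqpn : ∀ n, qpn Q a n ≠ 0 := fun n h => ha (by rw [← qpn_mul_qp_mul_pow hQ a n, h, zero_mul])
  have hlim : Tendsto (fun n => qp Q a / qpn Q a n) atTop (𝓝 (qp Q a / qp Q a)) :=
    tendsto_const_nhds.div ((multipliable_qp hQ a).hasProd.tendsto_prod_nat) ha
  rw [div_self ha] at hlim
  refine hlim.congr fun n => ?_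
  rw [div_eq_iff (hqpn n), mul_comm, qpn_mul_qp_mul_pow hQ a n]

lemma theta_ne_zero (hQ : ‖Q‖ < 1) (hQ0 : Q ≠ 0) {a : ℂ} (ha : ∀ k : ℤ, a ≠ Q ^ k) :
    theta Q a ≠ 0 := by
  refine mul_ne_zero (qp_ne_zero hQ fun n h => ha (-n) ?_) (qp_ne_zero hQ fun n h => ha (n + 1) ?_)
  · rw [zpow_neg, zpow_natCast]
    exact eq_inv_of_mul_eq_one_left h
  · have ha0 : a ≠ 0 := by rintro rfl; simp at h
    rw [zpow_add_one₀ hQ0, zpow_natCast]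
    field_simp at h
    rw [← h]
    ring

lemma theta_mul_nome (hQ : ‖Q‖ < 1) (hQ0 : Q ≠ 0) {x : ℂ} (hx : x ≠ 0) :
    theta Q (x * Q) = -x⁻¹ * theta Q x := by
  have h1 := qpn_mul_qp_mul_pow hQ x 1
  have h2 := qpn_mul_qp_mul_pow hQ x⁻¹ 1
  simp only [qpn, Finset.prod_range_one, pow_zero, mul_one, pow_one] at h1 h2
  rw [theta, theta, div_mul_cancel_right₀ hQ0, div_eq_inv_mul, ← h1, ← h2]
  field_simp
  ring

lemma theta_mul_zpow_neg (hQ : ‖Q‖ < 1) (hQ0 : Q ≠ 0) {x : ℂ} (hx : x ≠ 0) (n : ℕ) :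
    theta Q (x * Q ^ (-(n : ℤ))) * Q ^ (n + 1).choose 2 = (-x) ^ n * theta Q x := by
  induction n with
  | zero => simp
  | succ n ih =>
    have hy0 : x * Q ^ (-((n + 1 : ℕ) : ℤ)) ≠ 0 := mul_ne_zero hx (zpow_ne_zero _ hQ0)
    set y := x * Q ^ (-((n + 1 : ℕ) : ℤ)) with hy
    have hyQ : y * Q ^ (n + 1) = x := by
      rw [hy, mul_assoc, ← zpow_natCast, ← zpow_add₀ hQ0, neg_add_cancel, zpow_zero, mul_one]
    have hstep : theta Q (x * Q ^ (-(n : ℤ))) = -y⁻¹ * theta Q y := by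
      rw [← theta_mul_nome hQ hQ0 hy0, hy, mul_assoc, ← zpow_add_one₀ hQ0]
      push_cast
      ring_nf
    calc theta Q y * Q ^ (n + 1 + 1).choose 2
        = theta Q y * Q ^ (n + 1) * Q ^ (n + 1).choose 2 := by
          rw [Nat.choose_succ_succ' (n + 1), Nat.choose_one_right, pow_add, mul_assoc]
      _ = -x * (theta Q (x * Q ^ (-(n : ℤ))) * Q ^ (n + 1).choose 2) := by
          rw [hstep, ← hyQ]
          field_simp
      _ = (-x) ^ (n + 1) * theta Q x := by rw [ih]; ring

lemma qp_mul_zpow_neg_mul_qp (hQ : ‖Q‖ < 1) (hQ0 : Q ≠ 0) {x : ℂ} (hx : x ≠ 0) (n : ℕ) :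
    qp Q (x * Q ^ (-(n : ℤ))) * qp Q (Q / x * Q ^ n) * Q ^ (n + 1).choose 2 =
      (-x) ^ n * theta Q x := by
  rw [← theta_mul_zpow_neg hQ hQ0 hx n, theta, zpow_neg, zpow_natCast, div_mul_eq_mul_div,
    div_mul_eq_div_div_swap, div_inv_eq_mul]

lemma theta_mul_theta_mul_inv_qp_mul_qp (hQ : ‖Q‖ < 1) (hQ0 : Q ≠ 0) {a b : ℂ} (ha : a ≠ 0)
    (hb : b ≠ 0) (hθa : theta Q a ≠ 0) (hθb : theta Q b ≠ 0) (n : ℕ) :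
    theta Q a * theta Q b * (qp Q (a * Q ^ (-(n : ℤ))) * qp Q (b * Q ^ (-(n : ℤ))))⁻¹ *
        (a * b) ^ n * ((Q ^ (n + 1).choose 2) ^ 2)⁻¹ =
      qp Q (Q / a * Q ^ n) * qp Q (Q / b * Q ^ n) := by
  set Pa := qp Q (a * Q ^ (-(n : ℤ)))
  set Pb := qp Q (b * Q ^ (-(n : ℤ)))
  have hA : Pa * qp Q (Q / a * Q ^ n) * Q ^ (n + 1).choose 2 = (-a) ^ n * theta Q a :=
    qp_mul_zpow_neg_mul_qp hQ hQ0 ha n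
  have hB : Pb * qp Q (Q / b * Q ^ n) * Q ^ (n + 1).choose 2 = (-b) ^ n * theta Q b :=
    qp_mul_zpow_neg_mul_qp hQ hQ0 hb n
  have hPa : Pa ≠ 0 := fun h => by simp [h, ha, hθa, eq_comm] at hA
  have hPb : Pb ≠ 0 := fun h => by simp [h, hb, hθb, eq_comm] at hB
  have hsign : (-a) ^ n * (-b) ^ n = (a * b) ^ n := by rw [← mul_pow]; ring
  have key : theta Q a * theta Q b * (a * b) ^ n =
      Pa * Pb * (qp Q (Q / a * Q ^ n) * qp Q (Q / b * Q ^ n)) * (Q ^ (n + 1).choose 2) ^ 2 := by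
    rw [← hsign]
    linear_combination
      -((-b) ^ n * theta Q b) * hA - (Pa * qp Q (Q / a * Q ^ n) * Q ^ (n + 1).choose 2) * hB
  rw [mul_right_comm _ _ ((a * b) ^ n), key]
  field_simp

end

/-- Asymptotics of the weight `w(z q^k)` as `k → -∞`. -/
theorem weight_asymptotics (q : ℝ) (hq0 : 0 < q) (hq1 : q < 1) (z : ℝ) (hz : z ≠ 0)
    (c d : ℂ) (hc : c ≠ 0) (hd : d ≠ 0)
    (hcz : ∀ k : ℤ, c * (z : ℂ) ≠ (q : ℂ) ^ k) (hdz : ∀ k : ℤ, d * (z : ℂ) ≠ (q : ℂ) ^ k) :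
    Filter.Tendsto
      (fun k : ℤ =>
        theta (q : ℂ) (c * z) * theta (q : ℂ) (d * z) *
          (qp (q : ℂ) (c * z * (q : ℂ) ^ k) * qp (q : ℂ) (d * z * (q : ℂ) ^ k))⁻¹ *
          (c * d * (z : ℂ) ^ 2) ^ (-k) * (q : ℂ) ^ (-(k * (k - 1))))
      Filter.atBot (nhds 1) := by
  set Q : ℂ := (q : ℂ)
  have hQ : ‖Q‖ < 1 := by simpa [Q, abs_of_pos hq0] using hq1
  have hQ0 : Q ≠ 0 := Complex.ofReal_ne_zero.2 hq0.ne'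
  have hcz0 : c * z ≠ 0 := mul_ne_zero hc (Complex.ofReal_ne_zero.2 hz)
  have hdz0 : d * z ≠ 0 := mul_ne_zero hd (Complex.ofReal_ne_zero.2 hz)
  have hθc := theta_ne_zero hQ hQ0 hcz
  have hθd := theta_ne_zero hQ hQ0 hdz
  have hlim := (tendsto_qp_mul_pow hQ (right_ne_zero_of_mul hθc)).mul
    (tendsto_qp_mul_pow hQ (right_ne_zero_of_mul hθd))
  rw [one_mul] at hlim
  rw [← tendsto_comp_neg_atTop_iff, ← Nat.map_cast_int_atTop, tendsto_map'_iff]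
  refine hlim.congr fun n => ?_
  have hpow : Q ^ (-(-(n : ℤ) * (-(n : ℤ) - 1))) = ((Q ^ (n + 1).choose 2) ^ 2)⁻¹ := by
    have hchoose := Nat.add_one_mul_choose_eq n 1
    rw [Nat.choose_one_right] at hchoose
    rw [← pow_mul, ← zpow_natCast, ← zpow_neg, ← hchoose]
    push_cast
    ring_nf
  rw [Function.comp_apply, neg_neg, zpow_natCast, hpow,
    show c * d * (z : ℂ) ^ 2 = c * z * (d * z) by ring,
    theta_mul_theta_mul_inv_qp_mul_qp hQ hQ0 hcz0 hdz0 hθc hθd]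
end

section
/- Define the q-difference operator (Lf)(x) = A(x)(f(qx) − f(x)) + B(x)(f(x/q) − f(x)) with A(x) = (1 − 1/(cx))(1 − 1/(dx)), B(x) = q/(c d x²), weight w(x) = 1/((cx;q)_∞(dx;q)_∞), and Casorati determinant D(f,g)(x) = (f(x)g(qx) − f(qx)g(x)) v(x) with v(x) = (1−q)/(cdx) · 1/((cqx;q)_∞ (dqx;q)_∞). Then for any functions f, g on q^ℤ·z (z ≠ 0 fixed) and any x = z q^k: ((Lf)(x) g(x) − f(x)(Lg)(x)) (1−q) x w(x) = D(f,g)(x/q) − D(f,g)(x). -/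
open scoped BigOperators

/-- coefficient `A(x)` of the q-difference operator. -/
noncomputable def Acoef (c d x : ℂ) : ℂ := (1 - 1 / (c * x)) * (1 - 1 / (d * x))

/-- coefficient `B(x)` of the q-difference operator. -/
noncomputable def Bcoef (q c d x : ℂ) : ℂ := q / (c * d * x ^ 2)

/-- the second-order q-difference operator `L`. -/
noncomputable def Lop (q c d : ℂ) (f : ℂ → ℂ) (x : ℂ) : ℂ :=
  Acoef c d x * (f (q * x) - f x) + Bcoef q c d x * (f (x / q) - f x)

/-- the weight `w(x) = 1/((cx;q)_∞ (dx;q)_∞)`. -/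
noncomputable def wgt (q c d x : ℂ) : ℂ := (qp q (c * x) * qp q (d * x))⁻¹

/-- the function `v(x)` in the Casorati determinant. -/
noncomputable def vfun (q c d x : ℂ) : ℂ :=
  (1 - q) / (c * d * x) * (qp q (c * q * x) * qp q (d * q * x))⁻¹

/-- the Casorati determinant `D(f,g)(x)`. -/
noncomputable def Cas (q c d : ℂ) (f g : ℂ → ℂ) (x : ℂ) : ℂ :=
  (f x * g (q * x) - f (q * x) * g x) * vfun q c d x

/-!
Expanding `L f · g - f · L g` leaves `A(x)` times the Casorati bracket at `x` and `B(x)` times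
the bracket at `x / q`; the `f(x) g(x)` terms cancel. The weight turns the coefficients into
the Casorati factors: `(1 - q) x A(x) w(x) = v(x)` by the functional equation
`(a;q)_∞ = (1 - a) (aq;q)_∞` applied at `a = cx, dx` (where `1 - cx, 1 - dx ≠ 0` on `z q^ℤ`),
and `(1 - q) x B(x) w(x) = v(x / q)` directly from the definitions.
-/

section QPochhammer

variable {q : ℂ}

theorem multipliable_one_sub_mul_pow (hq : ‖q‖ < 1) (a : ℂ) :
    Multipliable fun n : ℕ => 1 - a * q ^ n := by
  simpa only [sub_eq_add_neg] using Complex.multipliable_one_add_of_summable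
    ((summable_geometric_of_norm_lt_one hq).mul_left a).neg

theorem qp_eq_one_sub_mul_qp (hq : ‖q‖ < 1) (a : ℂ) : qp q a = (1 - a) * qp q (a * q) := by
  have hshift : (fun n : ℕ => 1 - a * q ^ (n + 1)) = fun n => 1 - a * q * q ^ n :=
    funext fun n => by ring
  unfold qp
  rw [tprod_eq_zero_mul' (by rw [hshift]; exact multipliable_one_sub_mul_pow hq (a * q)), hshift,
    pow_zero, mul_one]

end QPochhammer

section LagrangeIdentity

variable {q c d x : ℂ}

theorem Acoef_mul_wgt (hq : ‖q‖ < 1) (hc : c ≠ 0) (hd : d ≠ 0) (hx : x ≠ 0)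
    (hcx : 1 - c * x ≠ 0) (hdx : 1 - d * x ≠ 0) :
    Acoef c d x * (1 - q) * x * wgt q c d x = vfun q c d x := by
  unfold Acoef wgt vfun
  rw [qp_eq_one_sub_mul_qp hq (c * x), qp_eq_one_sub_mul_qp hq (d * x), mul_right_comm c x,
    mul_right_comm d x, mul_mul_mul_comm, mul_inv (_ * _)]
  generalize (qp q (c * q * x) * qp q (d * q * x))⁻¹ = w
  have hxd : 1 - x * d ≠ 0 := mul_comm d x ▸ hdx
  field_simp
  ring

theorem Bcoef_mul_wgt (hq : q ≠ 0) :
    Bcoef q c d x * (1 - q) * x * wgt q c d x = vfun q c d (x / q) := by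
  unfold Bcoef wgt vfun
  rw [mul_assoc c q, mul_assoc d q, mul_div_cancel₀ _ hq]
  generalize (qp q (c * x) * qp q (d * x))⁻¹ = w
  field_simp

theorem Lop_mul_sub_mul_Lop (f g : ℂ → ℂ) :
    Lop q c d f x * g x - f x * Lop q c d g x =
      Acoef c d x * (f (q * x) * g x - f x * g (q * x)) +
        Bcoef q c d x * (f (x / q) * g x - f x * g (x / q)) := by
  unfold Lop
  ring

theorem Lop_mul_sub_mul_Lop_mul_wgt (hq₀ : q ≠ 0) (hq : ‖q‖ < 1) (hc : c ≠ 0) (hd : d ≠ 0)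
    (hx : x ≠ 0) (hcx : 1 - c * x ≠ 0) (hdx : 1 - d * x ≠ 0) (f g : ℂ → ℂ) :
    (Lop q c d f x * g x - f x * Lop q c d g x) * (1 - q) * x * wgt q c d x =
      Cas q c d f g (x / q) - Cas q c d f g x := by
  unfold Cas
  rw [Lop_mul_sub_mul_Lop, mul_div_cancel₀ x hq₀]
  linear_combination (f (q * x) * g x - f x * g (q * x)) * Acoef_mul_wgt hq hc hd hx hcx hdx +
    (f (x / q) * g x - f x * g (x / q)) * Bcoef_mul_wgt (c := c) (d := d) (x := x) hq₀

end LagrangeIdentity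

theorem one_sub_mul_mul_zpow_ne_zero {K : Type*} [DivisionRing K] {q c z : K}
    (h : ∀ k : ℤ, c * z ≠ q ^ k) (k : ℤ) : 1 - c * (z * q ^ k) ≠ 0 := by
  rw [sub_ne_zero, ne_comm, ← mul_assoc]
  intro hk
  exact h (-k) (by rw [zpow_neg]; exact eq_inv_of_mul_eq_one_left hk)

/-- Lagrange-type identity: `((Lf)g - f(Lg))(1-q)x w(x) = D(f,g)(x/q) - D(f,g)(x)`. -/
theorem lagrange_identity (q : ℝ) (hq0 : 0 < q) (hq1 : q < 1) (z : ℝ) (hz : z ≠ 0)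
    (c d : ℂ) (hc : c ≠ 0) (hd : d ≠ 0)
    (hcz : ∀ k : ℤ, c * (z : ℂ) ≠ (q : ℂ) ^ k) (hdz : ∀ k : ℤ, d * (z : ℂ) ≠ (q : ℂ) ^ k)
    (f g : ℂ → ℂ) (k : ℤ) (x : ℂ) (hx : x = (z : ℂ) * (q : ℂ) ^ k) :
    (Lop (q : ℂ) c d f x * g x - f x * Lop (q : ℂ) c d g x) * (1 - (q : ℂ)) * x *
        wgt (q : ℂ) c d x =
      Cas (q : ℂ) c d f g (x / (q : ℂ)) - Cas (q : ℂ) c d f g x := by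
  have hq₀ : (q : ℂ) ≠ 0 := by exact_mod_cast hq0.ne'
  have hq : ‖(q : ℂ)‖ < 1 := by rwa [Complex.norm_real, Real.norm_of_nonneg hq0.le]
  subst hx
  exact Lop_mul_sub_mul_Lop_mul_wgt hq₀ hq hc hd
    (mul_ne_zero (Complex.ofReal_ne_zero.mpr hz) (zpow_ne_zero k hq₀))
    (one_sub_mul_mul_zpow_ne_zero hcz k) (one_sub_mul_mul_zpow_ne_zero hdz k) f g
end
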